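/- arXiv:0906.2275 — 3 statements merged into one kernel-verified Lean document; each statement's English description precedes it below -/
import Mathlib

section
/- For every integer n ≥ 1, the sum over D from 1 to n of C(n-1, D-1)·exp(−(2 + log(n/D))·D) is at most 1. -/
/-!
Writing `exp (-(2 + log (n / D)) * D) = e⁻ᴰ (D / (e n))ᴰ` and using `C(n-1, D-1) ≤ C(n, D)`,
each term is at most `e⁻ᴰ` by the classical bound `C(n, D) ≤ (e n / D)ᴰ`, which follows from
`C(n, D) ≤ nᴰ / D!` and `Dᴰ / D! ≤ eᴰ`. The geometric series then gives
`∑_{D ≥ 1} e⁻ᴰ = 1 / (e - 1) ≤ 1`.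
-/

open Real Finset

theorem Nat.choose_mul_pow_le_exp_one_mul_pow (n k : ℕ) :
    (n.choose k : ℝ) * (k : ℝ) ^ k ≤ (exp 1 * n) ^ k := by
  have hk : (k : ℝ) ^ k / k.factorial ≤ exp k := pow_div_factorial_le_exp _ k.cast_nonneg k
  calc (n.choose k : ℝ) * (k : ℝ) ^ k
      ≤ (n : ℝ) ^ k / k.factorial * (k : ℝ) ^ k := by
        gcongr; exact Nat.choose_le_pow_div k n
    _ = (n : ℝ) ^ k * ((k : ℝ) ^ k / k.factorial) := by ring
    _ ≤ (n : ℝ) ^ k * exp k := by gcongr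
    _ = (exp 1 * n) ^ k := by rw [mul_pow, ← exp_nat_mul, mul_one, mul_comm]

theorem Nat.choose_mul_div_exp_one_mul_pow_le_one (n k : ℕ) :
    (n.choose k : ℝ) * ((k : ℝ) / (exp 1 * n)) ^ k ≤ 1 := by
  rw [div_pow, ← mul_div_assoc]
  exact div_le_one_of_le₀ (Nat.choose_mul_pow_le_exp_one_mul_pow n k) (by positivity)

theorem Nat.choose_pred_le_succ_choose (m k : ℕ) : m.choose (k - 1) ≤ (m + 1).choose k := by
  cases k with
  | zero => simp
  | succ k => simp [Nat.choose_succ_succ]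

theorem exp_neg_two_add_log_div_mul (x : ℝ) (k : ℕ) (hx : 0 < x) (hk : 0 < k) :
    exp (-(2 + log (x / k)) * k) = exp (-1) ^ k * ((k : ℝ) / (exp 1 * x)) ^ k := by
  have hlog : exp (-log (x / k)) = k / x := by
    rw [exp_neg, exp_log (by positivity), inv_div]
  rw [← mul_pow, mul_comm _ (k : ℝ), exp_nat_mul, neg_add, exp_add, hlog]
  congr 1
  rw [show (-2 : ℝ) = -1 + -1 by norm_num, exp_add, exp_neg 1]
  field_simp

theorem sum_Icc_exp_neg_one_pow_le_one (n : ℕ) : ∑ k ∈ Icc 1 n, exp (-1) ^ k ≤ 1 := by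
  have hpos : 0 < exp (-1) := exp_pos _
  have hhalf : exp (-1) ≤ 1 / 2 := by
    rw [exp_neg, inv_le_comm₀ (exp_pos 1) (by norm_num)]
    linarith [add_one_le_exp 1]
  calc ∑ k ∈ Icc 1 n, exp (-1) ^ k = ∑ k ∈ Ico 1 (n + 1), exp (-1) ^ k := rfl
    _ ≤ exp (-1) ^ 1 / (1 - exp (-1)) := geom_sum_Ico_le_of_lt_one hpos.le (by linarith)
    _ ≤ 1 := by rw [pow_one, div_le_one (by linarith)]; linarith

theorem choose_pred_mul_exp_le (n D : ℕ) (hD : D ∈ Icc 1 n) :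
    ((n - 1).choose (D - 1) : ℝ) * exp (-(2 + log ((n : ℝ) / (D : ℝ))) * (D : ℝ)) ≤
      exp (-1) ^ D := by
  obtain ⟨hD1, hDn⟩ := mem_Icc.mp hD
  obtain ⟨m, rfl⟩ : ∃ m, n = m + 1 := ⟨n - 1, by omega⟩
  have hchoose : (m.choose (D - 1) : ℝ) ≤ (m + 1).choose D := by
    exact_mod_cast Nat.choose_pred_le_succ_choose m D
  rw [exp_neg_two_add_log_div_mul _ D (by positivity) hD1, Nat.add_sub_cancel]
  calc (m.choose (D - 1) : ℝ) * (exp (-1) ^ D * ((D : ℝ) / (exp 1 * ↑(m + 1))) ^ D)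
      ≤ exp (-1) ^ D * (((m + 1).choose D : ℝ) * ((D : ℝ) / (exp 1 * ↑(m + 1))) ^ D) := by
        rw [mul_left_comm]; gcongr
    _ ≤ exp (-1) ^ D * 1 := by gcongr; exact Nat.choose_mul_div_exp_one_mul_pow_le_one _ _
    _ = exp (-1) ^ D := mul_one _

theorem stmt_1_general (n : ℕ) :
    ∑ D ∈ Finset.Icc 1 n,
      ((n - 1).choose (D - 1) : ℝ) *
        Real.exp (-(2 + Real.log ((n : ℝ) / (D : ℝ))) * (D : ℝ)) ≤ 1 :=
  (sum_le_sum fun D hD => choose_pred_mul_exp_le n D hD).trans (sum_Icc_exp_neg_one_pow_le_one n)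

/-- For every `n ≥ 1`, `∑_{D=1}^n C(n-1, D-1) exp(-(2 + log(n/D)) D) ≤ 1`. -/
theorem stmt_1 (n : ℕ) (hn : 1 ≤ n) :
    ∑ D ∈ Finset.Icc 1 n,
      ((n - 1).choose (D - 1) : ℝ) *
        Real.exp (-(2 + Real.log ((n : ℝ) / (D : ℝ))) * (D : ℝ)) ≤ 1 :=
  stmt_1_general n
end

section
/- Let u and v be probability vectors on a finite set such that every component of u and of v either equals zero or lies in the interval [1/4, 1], and u and v are mutually absolutely continuous (u_j = 0 iff v_j = 0). Then the Kullback–Leibler divergence K(u, v) = Σ_j u_j log(u_j/v_j) is at most 4·Σ_j (u_j − v_j)². -/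
/-- If `u, v` are probability vectors whose components are either `0` or in `[1/4, 1]`,
and `u_j = 0 ↔ v_j = 0`, then `K(u,v) = ∑ u_j log(u_j/v_j) ≤ 4 ∑ (u_j - v_j)²`. -/
theorem stmt_2 {r : ℕ} (u v : Fin r → ℝ)
    (hu0 : ∀ j, 0 ≤ u j) (hv0 : ∀ j, 0 ≤ v j)
    (husum : ∑ j, u j = 1) (hvsum : ∑ j, v j = 1)
    (hucomp : ∀ j, u j = 0 ∨ (1/4 ≤ u j ∧ u j ≤ 1))
    (hvcomp : ∀ j, v j = 0 ∨ (1/4 ≤ v j ∧ v j ≤ 1))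
    (hac : ∀ j, u j = 0 ↔ v j = 0) :
    ∑ j, u j * Real.log (u j / v j) ≤ 4 * ∑ j, (u j - v j) ^ 2 := by
  have key : ∀ j, u j * Real.log (u j / v j) ≤ 4 * (u j - v j) ^ 2 + (u j - v j) := by
    intro j
    by_cases hu : u j = 0
    · have hv : v j = 0 := (hac j).1 hu
      simp [hu, hv]
    · have hv : v j ≠ 0 := fun h => hu ((hac j).2 h)
      have hul : (1:ℝ)/4 ≤ u j := ((hucomp j).resolve_left hu).1
      have hvl : (1:ℝ)/4 ≤ v j := ((hvcomp j).resolve_left hv).1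
      have hvp : 0 < v j := lt_of_lt_of_le (by norm_num) hvl
      have hup : 0 < u j := lt_of_lt_of_le (by norm_num) hul
      have hlog : Real.log (u j / v j) ≤ u j / v j - 1 :=
        Real.log_le_sub_one_of_pos (div_pos hup hvp)
      have h1 : u j * Real.log (u j / v j) ≤ u j * (u j / v j - 1) :=
        mul_le_mul_of_nonneg_left hlog (hu0 j)
      refine h1.trans ?_
      have h2 : u j * (u j / v j - 1) = (u j - v j) ^ 2 / v j + (u j - v j) := by
        field_simp; ring
      rw [h2]
      have h3 : (u j - v j) ^ 2 / v j ≤ 4 * (u j - v j) ^ 2 := by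
        rw [div_le_iff₀ hvp]
        nlinarith [sq_nonneg (u j - v j)]
      linarith
  calc ∑ j, u j * Real.log (u j / v j)
      ≤ ∑ j, (4 * (u j - v j) ^ 2 + (u j - v j)) := Finset.sum_le_sum fun j _ => key j
    _ = 4 * ∑ j, (u j - v j) ^ 2 := by
        rw [Finset.sum_add_distrib, ← Finset.mul_sum, Finset.sum_sub_distrib, husum, hvsum]
        ring
end

section
/- Let u and v be two probability mass functions on a finite set and let any estimator be a measurable map ŝ from samples to the set of probability vectors. Then inf_{ŝ} max_{s ∈ {u,v}} E_s‖s − ŝ‖² ≥ (‖u − v‖²/4)·(1 − sqrt(K(P_u, P_v)/2)), where K denotes the Kullback–Leibler divergence between the sampling distributions. -/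
/-!
For every sample `ω`, `‖u - ŝ ω‖² + ‖v - ŝ ω‖² ≥ ‖u - v‖² / 2`, so the sum of the two risks is at
least `‖u - v‖² / 2 · ∑ min (p, q)`, and `∑ min (p, q) = 1 - TV` with `TV = ∑ |p - q| / 2`.
Pinsker's inequality `TV ≤ √(K / 2)` finishes the proof. Pinsker follows by Cauchy–Schwarz with the
weights `2 (p + 2q) / 3`, which sum to `2`, from the pointwise bound
`3 (x - y)² ≤ 2 (x + 2y) (x log (x / y) - x + y)`. In the variable `t = x / y` the difference of the
two sides has derivative `4 ((t + 1) log t - 2 (t - 1))`, an increasing function vanishing at `1`.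
-/

open Real Set Finset

lemma isMinOn_of_hasDerivAt_nonpos_left_nonneg_right {f f' : ℝ → ℝ} {a c : ℝ} (hc : a < c)
    (hf : ∀ x ∈ Ioi a, HasDerivAt f (f' x) x)
    (hleft : ∀ x ∈ Ioo a c, f' x ≤ 0) (hright : ∀ x ∈ Ioi c, 0 ≤ f' x) :
    IsMinOn f (Ioi a) c := by
  have hcont : ∀ s ⊆ Ioi a, ContinuousOn f s := fun s hs x hx =>
    (hf x (hs hx)).continuousAt.continuousWithinAt
  refine isMinOn_iff.2 fun x hx => ?_
  rcases le_total x c with hxc | hcx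
  · refine antitoneOn_of_hasDerivWithinAt_nonpos (f' := f') (convex_Ioc a c)
      (hcont _ Ioc_subset_Ioi_self) (fun y hy => ?_) (fun y hy => ?_) ⟨hx, hxc⟩ ⟨hc, le_rfl⟩ hxc
    · rw [interior_Ioc] at hy ⊢
      exact (hf y hy.1).hasDerivWithinAt
    · rw [interior_Ioc] at hy
      exact hleft y hy
  · refine monotoneOn_of_hasDerivWithinAt_nonneg (f' := f') (convex_Ici c)
      (hcont _ (Ici_subset_Ioi.2 hc)) (fun y hy => ?_) (fun y hy => ?_) (mem_Ici.2 le_rfl) hcx hcx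
    · rw [interior_Ici] at hy ⊢
      exact (hf y (hc.trans hy)).hasDerivWithinAt
    · rw [interior_Ici] at hy
      exact hright y hy

lemma monotoneOn_add_one_mul_log_sub_two_mul_sub_one :
    MonotoneOn (fun t => (t + 1) * log t - 2 * (t - 1)) (Ioi 0) := by
  have hderiv : ∀ t ∈ Ioi (0 : ℝ), HasDerivAt (fun t => (t + 1) * log t - 2 * (t - 1))
      (log t + (t + 1) * t⁻¹ - 2) t := fun t ht => by
    refine ((((hasDerivAt_id t).add_const 1).mul (hasDerivAt_log (ne_of_gt ht))).sub
      (((hasDerivAt_id t).sub_const 1).const_mul 2)).congr_deriv ?_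
    simp only [id_eq]
    ring
  refine monotoneOn_of_hasDerivWithinAt_nonneg (f' := fun t => log t + (t + 1) * t⁻¹ - 2)
    (convex_Ioi 0) (fun t ht => (hderiv t ht).continuousAt.continuousWithinAt)
    (fun t ht => ?_) (fun t ht => ?_)
  all_goals rw [interior_Ioi] at ht
  · exact (hderiv t ht).hasDerivWithinAt
  · have hlog := one_sub_inv_le_log_of_pos ht
    have hsplit : (t + 1) * t⁻¹ = 1 + t⁻¹ := by
      rw [add_mul, one_mul, mul_inv_cancel₀ (ne_of_gt ht)]
    linarith

lemma three_mul_sq_sub_one_le (t : ℝ) (ht : 0 ≤ t) :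
    3 * (t - 1) ^ 2 ≤ 2 * (t + 2) * (t * log t - t + 1) := by
  rcases ht.eq_or_lt with rfl | ht
  · norm_num
  set G : ℝ → ℝ := fun t => 2 * (t + 2) * (t * log t - t + 1) - 3 * (t - 1) ^ 2
  set H : ℝ → ℝ := fun t => (t + 1) * log t - 2 * (t - 1)
  have hG : ∀ x ∈ Ioi (0 : ℝ), HasDerivAt G (4 * H x) x := fun x hx => by
    have hxlog := ((hasDerivAt_mul_log (ne_of_gt hx)).sub (hasDerivAt_id x)).add_const 1
    refine ((((hasDerivAt_id x).add_const 2).const_mul 2).mul hxlog |>.sub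
      ((((hasDerivAt_id x).sub_const 1).pow 2).const_mul 3)).congr_deriv ?_
    simp only [H, id_eq, Pi.sub_apply]
    push_cast
    ring
  have hH1 : H 1 = 0 := by simp [H]
  have hmin := isMinOn_of_hasDerivAt_nonpos_left_nonneg_right one_pos hG
    (fun x hx => by
      have := monotoneOn_add_one_mul_log_sub_two_mul_sub_one hx.1 (mem_Ioi.2 one_pos) hx.2.le
      change H x ≤ H 1 at this
      linarith)
    (fun x hx => by
      have := monotoneOn_add_one_mul_log_sub_two_mul_sub_one (mem_Ioi.2 one_pos)
        (mem_Ioi.2 (one_pos.trans hx)) (le_of_lt hx)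
      change H 1 ≤ H x at this
      linarith)
  have := isMinOn_iff.1 hmin t ht
  simp only [G, log_one] at this
  linarith

lemma three_mul_sq_sub_le {x y : ℝ} (hx : 0 ≤ x) (hy : 0 < y) :
    3 * (x - y) ^ 2 ≤ 2 * (x + 2 * y) * (x * log (x / y) - x + y) := by
  have h := mul_le_mul_of_nonneg_left (three_mul_sq_sub_one_le (x / y) (by positivity))
    (sq_nonneg y)
  calc 3 * (x - y) ^ 2 = y ^ 2 * (3 * (x / y - 1) ^ 2) := by field_simp
    _ ≤ y ^ 2 * (2 * (x / y + 2) * (x / y * log (x / y) - x / y + 1)) := h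
    _ = 2 * (x + 2 * y) * (x * log (x / y) - x + y) := by field_simp

lemma sq_sum_abs_sub_le_two_mul_sum_mul_log_div {Ω : Type*} [Fintype Ω] {p q : Ω → ℝ}
    (hp0 : ∀ ω, 0 ≤ p ω) (hq0 : ∀ ω, 0 ≤ q ω) (hpsum : ∑ ω, p ω = 1) (hqsum : ∑ ω, q ω = 1)
    (hac : ∀ ω, q ω = 0 → p ω = 0) :
    (∑ ω, |p ω - q ω|) ^ 2 ≤ 2 * ∑ ω, p ω * log (p ω / q ω) := by
  set T : Ω → ℝ := fun ω => p ω * log (p ω / q ω) - p ω + q ω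
  set w : Ω → ℝ := fun ω => 2 * (p ω + 2 * q ω) / 3
  have hterm : ∀ ω, 0 ≤ T ω ∧ |p ω - q ω| ^ 2 ≤ T ω * w ω := fun ω => by
    rcases (hq0 ω).eq_or_lt with hq | hq
    · simp [T, w, ← hq, hac ω hq.symm]
    · have h := three_mul_sq_sub_le (hp0 ω) hq
      have hw : 0 < 2 * (p ω + 2 * q ω) := by linarith [hp0 ω]
      refine ⟨nonneg_of_mul_nonneg_right (by nlinarith [sq_nonneg (p ω - q ω)]) hw, ?_⟩
      simp only [sq_abs, T, w]
      linarith
  have hT : ∑ ω, T ω = ∑ ω, p ω * log (p ω / q ω) := by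
    simp only [T, sum_add_distrib, sum_sub_distrib, hpsum, hqsum]
    ring
  have hw : ∑ ω, w ω = 2 := by
    simp only [w, ← sum_div, ← mul_sum, sum_add_distrib, hpsum, hqsum]
    norm_num
  calc (∑ ω, |p ω - q ω|) ^ 2 ≤ (∑ ω, T ω) * ∑ ω, w ω :=
        sum_sq_le_sum_mul_sum_of_sq_le_mul _ (fun ω _ => (hterm ω).1)
          (fun ω _ => by positivity [hp0 ω, hq0 ω]) (fun ω _ => (hterm ω).2)
    _ = 2 * ∑ ω, p ω * log (p ω / q ω) := by rw [hT, hw, mul_comm]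

lemma sum_min_eq_one_sub_sum_abs_sub_div_two {Ω : Type*} [Fintype Ω] {p q : Ω → ℝ}
    (hpsum : ∑ ω, p ω = 1) (hqsum : ∑ ω, q ω = 1) :
    ∑ ω, min (p ω) (q ω) = 1 - (∑ ω, |p ω - q ω|) / 2 := by
  have h : ∀ ω, min (p ω) (q ω) = (p ω + q ω - |p ω - q ω|) / 2 := fun ω => by
    linarith [min_add_max (p ω) (q ω), max_sub_min_eq_abs' (p ω) (q ω)]
  rw [sum_congr rfl fun ω _ => h ω, ← sum_div, sum_sub_distrib, sum_add_distrib, hpsum, hqsum]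
  ring

lemma mul_sum_min_le_sum_mul_add_sum_mul {Ω : Type*} [Fintype Ω] {c : ℝ} {p q f g : Ω → ℝ}
    (hp0 : ∀ ω, 0 ≤ p ω) (hq0 : ∀ ω, 0 ≤ q ω) (hf0 : ∀ ω, 0 ≤ f ω) (hg0 : ∀ ω, 0 ≤ g ω)
    (hc : ∀ ω, c ≤ f ω + g ω) :
    c * ∑ ω, min (p ω) (q ω) ≤ ∑ ω, p ω * f ω + ∑ ω, q ω * g ω := by
  rw [mul_sum, ← sum_add_distrib]
  refine sum_le_sum fun ω _ => ?_
  have hm : 0 ≤ min (p ω) (q ω) := le_min (hp0 ω) (hq0 ω)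
  calc c * min (p ω) (q ω) ≤ min (p ω) (q ω) * f ω + min (p ω) (q ω) * g ω := by
        nlinarith [hc ω]
    _ ≤ p ω * f ω + q ω * g ω :=
        add_le_add (mul_le_mul_of_nonneg_right (min_le_left _ _) (hf0 ω))
          (mul_le_mul_of_nonneg_right (min_le_right _ _) (hg0 ω))

lemma sum_sq_sub_le_two_mul_add {ι : Type*} (s : Finset ι) (u v w : ι → ℝ) :
    ∑ j ∈ s, (u j - v j) ^ 2 ≤ 2 * (∑ j ∈ s, (u j - w j) ^ 2 + ∑ j ∈ s, (v j - w j) ^ 2) := by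
  rw [← sum_add_distrib, mul_sum]
  exact sum_le_sum fun j _ => by nlinarith [sq_nonneg (u j + v j - 2 * w j)]

/-- Two-point lower bound: for any estimator `ŝ` from a finite sample space `Ω`
(with sampling pmfs `p = P_u`, `q = P_v`), the maximum over `s ∈ {u, v}` of
`E_s ‖s - ŝ‖²` is at least `(‖u - v‖²/4)(1 - √(K(P_u, P_v)/2))`. -/
theorem stmt_4 {Ω : Type*} [Fintype Ω] {r : ℕ} (p q : Ω → ℝ)
    (hp0 : ∀ ω, 0 ≤ p ω) (hq0 : ∀ ω, 0 ≤ q ω)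
    (hpsum : ∑ ω, p ω = 1) (hqsum : ∑ ω, q ω = 1)
    (hac : ∀ ω, q ω = 0 → p ω = 0)
    (u v : Fin r → ℝ) (shat : Ω → Fin r → ℝ) :
    (∑ j, (u j - v j) ^ 2) / 4 *
        (1 - Real.sqrt ((∑ ω, p ω * Real.log (p ω / q ω)) / 2)) ≤
      max (∑ ω, p ω * ∑ j, (u j - shat ω j) ^ 2)
          (∑ ω, q ω * ∑ j, (v j - shat ω j) ^ 2) := by
  set A := ∑ ω, p ω * ∑ j, (u j - shat ω j) ^ 2
  set B := ∑ ω, q ω * ∑ j, (v j - shat ω j) ^ 2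
  have hpinsker : (∑ ω, |p ω - q ω|) / 2 ≤ √((∑ ω, p ω * log (p ω / q ω)) / 2) := by
    refine le_sqrt_of_sq_le ?_
    linarith [sq_sum_abs_sub_le_two_mul_sum_mul_log_div hp0 hq0 hpsum hqsum hac]
  have hrisk : (∑ j, (u j - v j) ^ 2) / 2 * ∑ ω, min (p ω) (q ω) ≤ A + B :=
    mul_sum_min_le_sum_mul_add_sum_mul hp0 hq0 (fun _ => sum_nonneg fun _ _ => sq_nonneg _)
      (fun _ => sum_nonneg fun _ _ => sq_nonneg _)
      (fun ω => by linarith [sum_sq_sub_le_two_mul_add univ u v (shat ω)])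
  calc (∑ j, (u j - v j) ^ 2) / 4 * (1 - √((∑ ω, p ω * log (p ω / q ω)) / 2))
      ≤ (∑ j, (u j - v j) ^ 2) / 4 * ∑ ω, min (p ω) (q ω) := by
        gcongr
        rw [sum_min_eq_one_sub_sum_abs_sub_div_two hpsum hqsum]
        linarith
    _ ≤ max A B := by linarith [le_max_left A B, le_max_right A B]
end
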